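/- arXiv:1211.4473 — 4 statements merged into one kernel-verified Lean document; each statement's English description precedes it below -/
import Mathlib

section
/- The schedule y_OFA, defined by y_OFA(t) = 1 if t lies in a type-1 critical segment and y_OFA(t) = 0 if t lies in a type-start, type-2 or type-end critical segment, minimizes Cost(y) over all schedules y : {1,…,T} → {0,1} (with y(0) = 0). -/
open scoped Classical

/-- Positive part `[x]⁺ = max {x, 0}`. -/
noncomputable def pPart (x : ℝ) : ℝ := max x 0

/-- The cost-minimizing local-generation level for a slot with input `(a, h, p)`
and on/off state `y` (Lemma 1 of the paper). -/
noncomputable def uStar (L co cg η a h p y : ℝ) : ℝ :=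
  if p + η * cg ≤ co then 0
  else if co ≤ p then min a (L * y)
  else min (h / η) (min a (L * y))

/-- Per-slot cost `ψ(σ(t), y) = c_o·u + p·v + c_g·s + c_m·y` under optimal dispatch. -/
noncomputable def psi (L cm co cg η a h p y : ℝ) : ℝ :=
  co * uStar L co cg η a h p y
    + p * pPart (a - uStar L co cg η a h p y)
    + cg * pPart (h - η * uStar L co cg η a h p y)
    + cm * y

/-- One-slot cost difference `δ(t) = ψ(σ(t),0) − ψ(σ(t),1)`. -/
noncomputable def delta (L cm co cg η : ℝ) (a h p : ℕ → ℝ) (t : ℕ) : ℝ :=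
  psi L cm co cg η (a t) (h t) (p t) 0 - psi L cm co cg η (a t) (h t) (p t) 1

/-- Cumulative cost difference `Δ(0) = −β`, `Δ(t) = min{0, max{−β, Δ(t−1) + δ(t)}}`. -/
noncomputable def Deficit (β : ℝ) (d : ℕ → ℝ) : ℕ → ℝ
  | 0 => -β
  | t + 1 => min 0 (max (-β) (Deficit β d t + d (t + 1)))

/-- Total cost of an on/off schedule `y` for problem SP over horizon `[1, T]`. -/
noncomputable def spCost (L cm co cg η β : ℝ) (a h p : ℕ → ℝ) (T : ℕ) (y : ℕ → ℝ) : ℝ :=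
  ∑ t ∈ Finset.Icc 1 T,
    (psi L cm co cg η (a t) (h t) (p t) (y t) + β * pPart (y t - y (t - 1)))

/-- The offline schedule `y_OFA`: `1` on type-1 critical segments, `0` elsewhere.
Here `Tc 0 = 0 < Tc 1 < … < Tc k` are the critical points; the segment
`[Tc i + 1, Tc (i+1)]` is type-1 when `Δ(Tc i) = −β` and `Δ(Tc (i+1)) = 0`. -/
noncomputable def yOFA (β : ℝ) (d : ℕ → ℝ) (k : ℕ) (Tc : ℕ → ℕ) (t : ℕ) : ℝ :=
  if ∃ i, 1 ≤ i ∧ i + 1 ≤ k ∧ Deficit β d (Tc i) = -β ∧ Deficit β d (Tc (i + 1)) = 0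
      ∧ Tc i < t ∧ t ≤ Tc (i + 1)
  then 1 else 0

/-! ### Auxiliary development -/

/-- DP value pair: `(Gg β d t).1` = min reduced cost on `[1,t]` ending off,
`(Gg β d t).2` = min reduced cost ending on. -/
noncomputable def Gg (β : ℝ) (d : ℕ → ℝ) : ℕ → ℝ × ℝ
  | 0 => (0, β)
  | t + 1 => (min (Gg β d t).1 (Gg β d t).2,
      min (Gg β d t).2 ((Gg β d t).1 + β) - d (t + 1))

/-- Reduced cost of a schedule over `[1, t]`. -/
noncomputable def Pcost (β : ℝ) (d : ℕ → ℝ) (y : ℕ → ℝ) (t : ℕ) : ℝ :=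
  ∑ τ ∈ Finset.Icc 1 t, (β * pPart (y τ - y (τ - 1)) - d τ * y τ)

lemma min_sub_min (β u v : ℝ) (hβ : 0 < β) :
    min u v - min v (u + β) = min 0 (max (-β) (u - v)) := by
  rcases le_total u v with h1 | h1 <;> rcases le_total v (u + β) with h2 | h2 <;>
    simp only [min_def, max_def] <;> split_ifs <;> linarith

lemma Deficit_eq_Gg (β : ℝ) (hβ : 0 < β) (d : ℕ → ℝ) (t : ℕ) :
    Deficit β d t = min 0 (max (-β) ((Gg β d t).1 - (Gg β d t).2)) := by
  induction t with
  | zero =>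
      show -β = min 0 (max (-β) ((0:ℝ) - β))
      rw [zero_sub, max_self, min_eq_right (by linarith : -β ≤ (0:ℝ))]
  | succ t ih =>
      show min 0 (max (-β) (Deficit β d t + d (t + 1))) = _
      have hG : (Gg β d (t+1)).1 - (Gg β d (t+1)).2
          = min 0 (max (-β) ((Gg β d t).1 - (Gg β d t).2)) + d (t + 1) := by
        show min (Gg β d t).1 (Gg β d t).2 - (min (Gg β d t).2 ((Gg β d t).1 + β) - d (t+1)) = _
        rw [← min_sub_min β (Gg β d t).1 (Gg β d t).2 hβ]; ring
      rw [hG, ← ih]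

lemma gg1 {β : ℝ} (hβ : 0 < β) {d : ℕ → ℝ} {t : ℕ} (hne : Deficit β d t ≠ 0) :
    (Gg β d t).1 ≤ (Gg β d t).2 := by
  rw [Deficit_eq_Gg β hβ d t] at hne
  by_contra hc
  push_neg at hc
  exact hne (by rw [max_eq_right (by linarith), min_eq_left (by linarith)])

lemma gg2 {β : ℝ} (hβ : 0 < β) {d : ℕ → ℝ} {t : ℕ} (heq : Deficit β d t = -β) :
    (Gg β d t).1 + β ≤ (Gg β d t).2 := by
  rw [Deficit_eq_Gg β hβ d t] at heq
  rcases le_total 0 (max (-β) ((Gg β d t).1 - (Gg β d t).2)) with hm | hm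
  · rw [min_eq_left hm] at heq; linarith
  · rw [min_eq_right hm] at heq
    have := max_eq_left_iff.mp heq
    linarith

lemma gg3 {β : ℝ} (hβ : 0 < β) {d : ℕ → ℝ} {t : ℕ} (hne : Deficit β d t ≠ -β) :
    (Gg β d t).2 ≤ (Gg β d t).1 + β := by
  by_contra hc
  push_neg at hc
  apply hne
  rw [Deficit_eq_Gg β hβ d t, max_eq_left (by linarith), min_eq_right (by linarith)]

lemma gg4 {β : ℝ} (hβ : 0 < β) {d : ℕ → ℝ} {t : ℕ} (heq : Deficit β d t = 0) :
    (Gg β d t).2 ≤ (Gg β d t).1 := by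
  rw [Deficit_eq_Gg β hβ d t] at heq
  rcases le_or_gt (Gg β d t).2 (Gg β d t).1 with hle | hlt
  · exact hle
  · exfalso
    have hmax : max (-β) ((Gg β d t).1 - (Gg β d t).2) < 0 :=
      max_lt (by linarith) (by linarith)
    rw [min_eq_right hmax.le] at heq; linarith

lemma exists_seg (Tc : ℕ → ℕ) :
    ∀ k t, Tc 0 < t → t ≤ Tc k → ∃ i, i < k ∧ Tc i < t ∧ t ≤ Tc (i + 1) := by
  intro k
  induction k with
  | zero => intro t h1 h2; omega
  | succ k ih =>
      intro t h1 h2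
      by_cases hc : t ≤ Tc k
      · obtain ⟨i, hi, h3, h4⟩ := ih t h1 hc
        exact ⟨i, by omega, h3, h4⟩
      · exact ⟨k, by omega, by omega, h2⟩

lemma Pcost_succ (β : ℝ) (d : ℕ → ℝ) (y : ℕ → ℝ) (t : ℕ) :
    Pcost β d y (t + 1)
      = Pcost β d y t + (β * pPart (y (t + 1) - y t) - d (t + 1) * y (t + 1)) := by
  unfold Pcost
  rw [Finset.sum_Icc_succ_top (by omega : 1 ≤ t + 1)]
  simp

lemma pPart_zero : pPart 0 = 0 := by simp [pPart]
lemma pPart_one : pPart 1 = 1 := by simp [pPart]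
lemma pPart_neg_one : pPart (-1) = 0 := by simp [pPart]

/-- DP lower bound on the reduced cost of any binary schedule. -/
lemma Pcost_ge {β : ℝ} (hβ : 0 < β) (d : ℕ → ℝ) (y : ℕ → ℝ) (hy0 : y 0 = 0)
    (hbin : ∀ t, y t = 0 ∨ y t = 1) (t : ℕ) :
    (y t = 0 → (Gg β d t).1 ≤ Pcost β d y t)
      ∧ (y t = 1 → (Gg β d t).2 ≤ Pcost β d y t) := by
  induction t with
  | zero =>
      constructor
      · intro _; simp [Pcost, Gg]
      · intro hcon; rw [hy0] at hcon; norm_num at hcon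
  | succ t ih =>
      have hg0 : (Gg β d (t+1)).1 = min (Gg β d t).1 (Gg β d t).2 := rfl
      have hg1 : (Gg β d (t+1)).2 = min (Gg β d t).2 ((Gg β d t).1 + β) - d (t+1) := rfl
      have hP := Pcost_succ β d y t
      rcases hbin (t + 1) with hb' | hb'
      · refine ⟨fun _ => ?_, fun hcon => absurd (hb'.symm.trans hcon) (by norm_num)⟩
        rcases hbin t with hb | hb
        · have h1 := ih.1 hb
          rw [hP, hb, hb']
          rw [hg0]
          have : (0:ℝ) - 0 = 0 := by norm_num
          rw [this, pPart_zero]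
          have := min_le_left (Gg β d t).1 (Gg β d t).2
          linarith
        · have h1 := ih.2 hb
          rw [hP, hb, hb', hg0]
          have h2 : (0:ℝ) - 1 = -1 := by norm_num
          rw [h2, pPart_neg_one]
          have := min_le_right (Gg β d t).1 (Gg β d t).2
          linarith
      · refine ⟨fun hcon => absurd (hb'.symm.trans hcon) (by norm_num), fun _ => ?_⟩
        rcases hbin t with hb | hb
        · have h1 := ih.1 hb
          rw [hP, hb, hb', hg1]
          have h2 : (1:ℝ) - 0 = 1 := by norm_num
          rw [h2, pPart_one]
          have := min_le_right (Gg β d t).2 ((Gg β d t).1 + β)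
          linarith
        · have h1 := ih.2 hb
          rw [hP, hb, hb', hg1]
          have h2 : (1:ℝ) - 1 = 0 := by norm_num
          rw [h2, pPart_zero]
          have := min_le_left (Gg β d t).2 ((Gg β d t).1 + β)
          linarith

/-- `y_OFA` minimizes `Cost(y)` over all on/off schedules. -/
theorem yOFA_offline_optimal
    (L cm co cg η β Pmin Pmax : ℝ) (T k : ℕ) (a h p : ℕ → ℝ) (Tc : ℕ → ℕ)
    (hL : 0 < L) (hβ : 0 < β) (hcm : 0 < cm) (hco : 0 < co) (hcg : 0 < cg)
    (hη : 0 ≤ η) (hcocg : η * cg ≤ co) (hint : co + cm / L < Pmax + η * cg)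
    (ha : ∀ t, 0 ≤ a t) (hh : ∀ t, 0 ≤ h t) (hp : ∀ t, Pmin ≤ p t ∧ p t ≤ Pmax)
    -- the critical-segment structure:
    (hTc0 : Tc 0 = 0) (hTcmono : ∀ i, i < k → Tc i < Tc (i + 1)) (hTck : Tc k ≤ T)
    -- critical points carry alternating extreme values of Δ, starting with −β:
    (halt : ∀ i, 1 ≤ i → i ≤ k →
      Deficit β (delta L cm co cg η a h p) (Tc i) = if Odd i then -β else 0)
    -- inside a critical segment, Δ never re-attains the extreme value of its left
    -- critical point (for the type-start segment, Δ never attains 0):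
    (hseg : ∀ i, i < k → ∀ t, Tc i < t → t ≤ Tc (i + 1) →
      Deficit β (delta L cm co cg η a h p) t ≠
        (if i = 0 then (0 : ℝ) else if Odd i then -β else 0))
    -- after the last critical point, Δ attains neither extreme (type-end segment):
    (hend : ∀ t, Tc k < t → t ≤ T →
      Deficit β (delta L cm co cg η a h p) t ≠ 0 ∧
      Deficit β (delta L cm co cg η a h p) t ≠ -β) :
    ∀ y : ℕ → ℝ, y 0 = 0 → (∀ t, y t = 0 ∨ y t = 1) →
      spCost L cm co cg η β a h p T (yOFA β (delta L cm co cg η a h p) k Tc)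
        ≤ spCost L cm co cg η β a h p T y := by
  intro y hy0 hybin
  set d : ℕ → ℝ := delta L cm co cg η a h p with hd
  set Y : ℕ → ℝ := yOFA β d k Tc with hYdef
  -- basic facts about yOFA
  have hbOFA : ∀ t, Y t = 0 ∨ Y t = 1 := by
    intro t; rw [hYdef]; unfold yOFA; split
    · right; rfl
    · left; rfl
  have hY0 : Y 0 = 0 := by
    rw [hYdef]; unfold yOFA
    rw [if_neg]
    rintro ⟨i, -, -, -, -, h5, -⟩; omega
  -- yOFA introduction rule
  have hofa1 : ∀ i t, Odd i → i + 1 ≤ k → Tc i < t → t ≤ Tc (i + 1) → Y t = 1 := by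
    intro i t hodd hik h1 h2
    have h1i : 1 ≤ i := by rcases hodd with ⟨m, hm⟩; omega
    rw [hYdef]; unfold yOFA
    rw [if_pos]
    refine ⟨i, h1i, hik, ?_, ?_, h1, h2⟩
    · rw [halt i h1i (by omega), if_pos hodd]
    · rw [halt (i + 1) (by omega) hik, if_neg]
      rw [Nat.odd_add_one]
      exact not_not_intro hodd
  -- yOFA elimination rule
  have hofa1' : ∀ t, Y t = 1 → ∃ i, Odd i ∧ i + 1 ≤ k ∧ Tc i < t ∧ t ≤ Tc (i + 1) := by
    intro t ht
    rw [hYdef] at ht; unfold yOFA at ht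
    split_ifs at ht with hc
    · obtain ⟨i, h1, h2, h3, h4, h5, h6⟩ := hc
      by_cases ho : Odd i
      · exact ⟨i, ho, h2, h5, h6⟩
      · exfalso
        have h7 := (halt i h1 (by omega)).symm.trans h3
        rw [if_neg ho] at h7
        linarith
    · norm_num at ht
  -- monotonicity of Tc
  have hmono : ∀ j, j ≤ k → ∀ i, i ≤ j → Tc i ≤ Tc j := by
    intro j
    induction j with
    | zero => intro _ i hi; have : i = 0 := by omega
              rw [this]
    | succ j ih =>
        intro hjk i hi
        rcases Nat.eq_or_lt_of_le hi with heq | hlt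
        · rw [heq]
        · exact le_trans (ih (by omega) i (by omega)) (le_of_lt (hTcmono j (by omega)))
  -- key Deficit facts (F-lemmas)
  have hF3 : ∀ t, t ≤ T → Y t = 0 → Deficit β d t ≠ 0 := by
    intro t htT hY
    rcases Nat.eq_zero_or_pos t with rfl | hpos
    · show Deficit β d 0 ≠ 0
      show -β ≠ (0:ℝ)
      linarith
    · by_cases hle : t ≤ Tc k
      · obtain ⟨i, hik, h1, h2⟩ := exists_seg Tc k t (by omega) hle
        by_cases ho : Odd i
        · exfalso
          have := hofa1 i t ho (by omega) h1 h2
          rw [hY] at this; norm_num at this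
        · have hfb := hseg i hik t h1 h2
          rw [hd] at hfb
          intro hzero
          apply hfb
          rw [← hd, hzero]
          by_cases hi0 : i = 0
          · rw [if_pos hi0]
          · rw [if_neg hi0, if_neg ho]
      · exact (hend t (by omega) htT).1
  have hF4 : ∀ t, Y t = 1 → Deficit β d t ≠ -β := by
    intro t ht
    obtain ⟨i, ho, hik, h1, h2⟩ := hofa1' t ht
    have hfb := hseg i (by omega) t h1 h2
    have hne : i ≠ 0 := by rcases ho with ⟨m, hm⟩; omega
    rw [if_neg hne, if_pos ho] at hfb
    rw [hd]
    exact hfb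
  have hF5 : ∀ t, Y t = 0 → Y (t + 1) = 1 → Deficit β d t = -β := by
    intro t h0 h1
    obtain ⟨i, ho, hik, ha1, ha2⟩ := hofa1' (t + 1) h1
    have h1i : 1 ≤ i := by rcases ho with ⟨m, hm⟩; omega
    have hti : t = Tc i := by
      by_contra hne
      have := hofa1 i t ho hik (by omega) (by omega)
      rw [h0] at this; norm_num at this
    rw [hti, halt i h1i (by omega), if_pos ho]
  have hF6 : ∀ t, Y t = 1 → Y (t + 1) = 0 → Deficit β d t = 0 := by
    intro t h1 h0
    obtain ⟨i, ho, hik, ha1, ha2⟩ := hofa1' t h1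
    have hti : t = Tc (i + 1) := by
      by_contra hne
      have := hofa1 i (t + 1) ho hik (by omega) (by omega)
      rw [h0] at this; norm_num at this
    rw [hti, halt (i + 1) (by omega) hik, if_neg]
    rw [Nat.odd_add_one]
    exact not_not_intro ho
  have hF7 : Y T = 1 → Deficit β d T = 0 := by
    intro h1
    obtain ⟨i, ho, hik, ha1, ha2⟩ := hofa1' T h1
    have hle : Tc (i + 1) ≤ Tc k := hmono k le_rfl (i + 1) hik
    have hti : T = Tc (i + 1) := by omega
    rw [hti, halt (i + 1) (by omega) hik, if_neg]
    rw [Nat.odd_add_one]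
    exact not_not_intro ho
  -- main identity: yOFA achieves the DP value
  have hmain : ∀ t, t ≤ T →
      Pcost β d Y t = (if Y t = 1 then (Gg β d t).2 else (Gg β d t).1) := by
    intro t
    induction t with
    | zero =>
        intro _
        rw [if_neg (by rw [hY0]; norm_num)]
        simp [Pcost, Gg]
    | succ t ih =>
        intro htT
        have ihh := ih (by omega)
        have hg0 : (Gg β d (t+1)).1 = min (Gg β d t).1 (Gg β d t).2 := rfl
        have hg1 : (Gg β d (t+1)).2 = min (Gg β d t).2 ((Gg β d t).1 + β) - d (t+1) := rfl
        have hP := Pcost_succ β d Y t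
        rcases hbOFA t with hb | hb <;> rcases hbOFA (t + 1) with hb' | hb'
        · -- off, off
          rw [if_neg (by rw [hb]; norm_num)] at ihh
          rw [if_neg (by rw [hb']; norm_num), hP, hb, hb', hg0,
            min_eq_left (gg1 hβ (hF3 t (by omega) hb))]
          rw [show (0:ℝ) - 0 = 0 by norm_num, pPart_zero, ihh]
          ring
        · -- off, on
          rw [if_neg (by rw [hb]; norm_num)] at ihh
          rw [if_pos hb', hP, hb, hb', hg1,
            min_eq_right (gg2 hβ (hF5 t hb hb'))]
          rw [show (1:ℝ) - 0 = 1 by norm_num, pPart_one, ihh]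
          ring
        · -- on, off
          rw [if_pos hb] at ihh
          rw [if_neg (by rw [hb']; norm_num), hP, hb, hb', hg0,
            min_eq_right (gg4 hβ (hF6 t hb hb'))]
          rw [show (0:ℝ) - 1 = -1 by norm_num, pPart_neg_one, ihh]
          ring
        · -- on, on
          rw [if_pos hb] at ihh
          rw [if_pos hb', hP, hb, hb', hg1,
            min_eq_left (gg3 hβ (hF4 t hb))]
          rw [show (1:ℝ) - 1 = 0 by norm_num, pPart_zero, ihh]
          ring
  -- cost decomposition
  have hdec : ∀ z : ℕ → ℝ, (∀ t, z t = 0 ∨ z t = 1) →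
      spCost L cm co cg η β a h p T z
        = (∑ t ∈ Finset.Icc 1 T, psi L cm co cg η (a t) (h t) (p t) 0)
          + Pcost β d z T := by
    intro z hz
    unfold spCost Pcost
    rw [← Finset.sum_add_distrib]
    refine Finset.sum_congr rfl fun t _ => ?_
    have hpsi : psi L cm co cg η (a t) (h t) (p t) (z t)
        = psi L cm co cg η (a t) (h t) (p t) 0 - d t * z t := by
      rcases hz t with hz' | hz' <;> rw [hz'] <;> rw [hd] <;> unfold delta <;> ring
    rw [hpsi]; ring
  rw [hdec y hybin, hdec Y hbOFA]
  have hlow := Pcost_ge hβ d y hy0 hybin T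
  have key : Pcost β d Y T ≤ Pcost β d y T := by
    rcases hybin T with hyT | hyT
    · have h1 := hlow.1 hyT
      rcases hbOFA T with hYT | hYT
      · rw [hmain T le_rfl, if_neg (by rw [hYT]; norm_num)]
        exact le_trans le_rfl h1
      · rw [hmain T le_rfl, if_pos hYT]
        have := gg4 hβ (hF7 hYT)
        linarith
    · have h1 := hlow.2 hyT
      rcases hbOFA T with hYT | hYT
      · rw [hmain T le_rfl, if_neg (by rw [hYT]; norm_num)]
        have := gg1 hβ (hF3 T le_rfl hYT)
        linarith
      · rw [hmain T le_rfl, if_pos hYT]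
        linarith
  linarith
end

section
/- Let [T_i^c+1, T_{i+1}^c] be a critical segment and let τ_1 < τ_2 with τ_1, τ_2 ∈ [T_i^c+1, T_{i+1}^c]. If the segment is type-1 (so Δ(t) > −β for all t in the segment) then Δ(τ_2) − Δ(τ_1) ≤ Σ_{t=τ_1+1}^{τ_2} δ(t); if the segment is type-2 (so Δ(t) < 0 for all t in the segment) then Δ(τ_2) − Δ(τ_1) ≥ Σ_{t=τ_1+1}^{τ_2} δ(t). -/
lemma deficit_step_le (β : ℝ) (d : ℕ → ℝ) (t : ℕ)
    (h : -β < Deficit β d (t + 1)) :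
    Deficit β d (t + 1) ≤ Deficit β d t + d (t + 1) := by
  set x := Deficit β d t + d (t + 1) with hx
  by_cases hc : -β ≤ x
  · have : Deficit β d (t + 1) ≤ max (-β) x := by
      rw [Deficit]; exact min_le_right _ _
    simpa [max_eq_right hc] using this
  · exfalso
    push_neg at hc
    have : Deficit β d (t + 1) ≤ max (-β) x := by
      rw [Deficit]; exact min_le_right _ _
    rw [max_eq_left hc.le] at this
    linarith

lemma deficit_step_ge (β : ℝ) (d : ℕ → ℝ) (t : ℕ)
    (h : Deficit β d (t + 1) < 0) :
    Deficit β d t + d (t + 1) ≤ Deficit β d (t + 1) := by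
  have heq : Deficit β d (t + 1) = min 0 (max (-β) (Deficit β d t + d (t + 1))) := rfl
  rw [heq] at h ⊢
  rcases min_cases 0 (max (-β) (Deficit β d t + d (t + 1))) with ⟨h1, h2⟩ | ⟨h1, h2⟩
  · rw [h1] at h; linarith
  · rw [h1]; exact le_max_right _ _

/-- on a critical segment `[S1+1, S2]` and `τ1 < τ2` in it:
if the segment is type-1 (so `Δ > −β` on the segment) then
`Δ(τ2) − Δ(τ1) ≤ Σ_{t=τ1+1}^{τ2} δ(t)`; if it is type-2 (so `Δ < 0` on the
segment) then `Δ(τ2) − Δ(τ1) ≥ Σ_{t=τ1+1}^{τ2} δ(t)`. -/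
theorem deficit_increment_bounds
    (β : ℝ) (hβ : 0 < β) (d : ℕ → ℝ) (S1 S2 τ1 τ2 : ℕ)
    (hτ1 : S1 + 1 ≤ τ1) (hτ12 : τ1 < τ2) (hτ2 : τ2 ≤ S2) :
    ((∀ t, S1 + 1 ≤ t → t ≤ S2 → -β < Deficit β d t) →
      Deficit β d τ2 - Deficit β d τ1 ≤ ∑ t ∈ Finset.Icc (τ1 + 1) τ2, d t) ∧
    ((∀ t, S1 + 1 ≤ t → t ≤ S2 → Deficit β d t < 0) →
      (∑ t ∈ Finset.Icc (τ1 + 1) τ2, d t) ≤ Deficit β d τ2 - Deficit β d τ1) := by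
  constructor
  · intro h
    have hge : τ1 + 1 ≤ τ2 := hτ12
    clear hτ12
    induction τ2, hge using Nat.le_induction with
    | base =>
        rw [Finset.Icc_self, Finset.sum_singleton]
        have := deficit_step_le β d τ1 (h (τ1 + 1) (by omega) hτ2)
        linarith
    | succ n hn ih =>
        have hsum : ∑ t ∈ Finset.Icc (τ1 + 1) (n + 1), d t
            = (∑ t ∈ Finset.Icc (τ1 + 1) n, d t) + d (n + 1) :=
          Finset.sum_Icc_succ_top (by omega) _
        have h1 := ih (by omega)
        have h2 := deficit_step_le β d n (h (n + 1) (by omega) hτ2)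
        rw [hsum]; linarith
  · intro h
    have hge : τ1 + 1 ≤ τ2 := hτ12
    clear hτ12
    induction τ2, hge using Nat.le_induction with
    | base =>
        rw [Finset.Icc_self, Finset.sum_singleton]
        have := deficit_step_ge β d τ1 (h (τ1 + 1) (by omega) hτ2)
        linarith
    | succ n hn ih =>
        have hsum : ∑ t ∈ Finset.Icc (τ1 + 1) (n + 1), d t
            = (∑ t ∈ Finset.Icc (τ1 + 1) n, d t) + d (n + 1) :=
          Finset.sum_Icc_succ_top (by omega) _
        have h1 := ih (by omega)
        have h2 := deficit_step_ge β d n (h (n + 1) (by omega) hτ2)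
        rw [hsum]; linarith
end

section
/- Let ỹ_n(t) ∈ {0,1} for n = 1,…,N and t ∈ {0,…,T}, and define the rearranged schedules ŷ_n(t) := 1 if n ≤ Σ_{r=1}^N ỹ_r(t) and ŷ_n(t) := 0 otherwise. Then for every t ≥ 1, Σ_{n=1}^N [ŷ_n(t) − ŷ_n(t−1)]^+ ≤ Σ_{n=1}^N [ỹ_n(t) − ỹ_n(t−1)]^+; i.e., the sorted rearrangement does not increase the total number of startup events at any time slot. -/
open scoped Classical

lemma sum_binary (N : ℕ) (f : ℕ → ℝ)
    (h : ∀ n ∈ Finset.Icc 1 N, f n = 0 ∨ f n = 1) :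
    ∃ k : ℕ, k ≤ N ∧ ∑ n ∈ Finset.Icc 1 N, f n = k := by
  refine ⟨((Finset.Icc 1 N).filter (fun n => f n = 1)).card, ?_, ?_⟩
  · calc ((Finset.Icc 1 N).filter (fun n => f n = 1)).card
        ≤ (Finset.Icc 1 N).card := Finset.card_filter_le _ _
      _ = N := by simp
  · rw [← Finset.sum_boole]
    refine Finset.sum_congr rfl fun n hn => ?_
    rcases h n hn with h | h <;> simp [h]

/-- sorting the on/off schedules (generator `n` is on at `t` in the
rearranged schedule iff `n ≤ Σ_r ỹ_r(t)`) does not increase the total number of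
startup events at any time slot. -/
theorem sorted_rearrangement_startups
    (N T : ℕ) (yt : ℕ → ℕ → ℝ)
    (hbin : ∀ n, 1 ≤ n → n ≤ N → ∀ t, t ≤ T → (yt n t = 0 ∨ yt n t = 1)) :
    ∀ t, 1 ≤ t → t ≤ T →
      (∑ n ∈ Finset.Icc 1 N,
          pPart ((if (n : ℝ) ≤ ∑ r ∈ Finset.Icc 1 N, yt r t then (1 : ℝ) else 0)
            - (if (n : ℝ) ≤ ∑ r ∈ Finset.Icc 1 N, yt r (t - 1) then (1 : ℝ) else 0)))
        ≤ ∑ n ∈ Finset.Icc 1 N, pPart (yt n t - yt n (t - 1)) := by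
  intro t ht1 htT
  obtain ⟨k1, hk1N, hk1⟩ := sum_binary N (fun r => yt r t)
    (fun n hn => by
      rw [Finset.mem_Icc] at hn
      exact hbin n hn.1 hn.2 t htT)
  obtain ⟨k0, hk0N, hk0⟩ := sum_binary N (fun r => yt r (t - 1))
    (fun n hn => by
      rw [Finset.mem_Icc] at hn
      exact hbin n hn.1 hn.2 (t - 1) (le_trans (Nat.sub_le t 1) htT))
  have hk1' : ∑ r ∈ Finset.Icc 1 N, yt r t = (k1 : ℝ) := hk1
  have hk0' : ∑ r ∈ Finset.Icc 1 N, yt r (t - 1) = (k0 : ℝ) := hk0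
  rw [hk1', hk0']
  have hLHS : (∑ n ∈ Finset.Icc 1 N,
      pPart ((if (n : ℝ) ≤ (k1 : ℝ) then (1 : ℝ) else 0)
        - (if (n : ℝ) ≤ (k0 : ℝ) then (1 : ℝ) else 0)))
      = (((Finset.Icc 1 N).filter (fun n => k0 < n ∧ n ≤ k1)).card : ℝ) := by
    rw [← Finset.sum_boole]
    refine Finset.sum_congr rfl fun n _ => ?_
    rcases le_or_gt n k0 with h0 | h0
    · rcases le_or_gt n k1 with h1 | h1
      · rw [if_pos (Nat.cast_le.mpr h1), if_pos (Nat.cast_le.mpr h0),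
          if_neg (by omega : ¬(k0 < n ∧ n ≤ k1))]
        norm_num [pPart]
      · rw [if_neg (by exact_mod_cast not_le.mpr h1 : ¬(n : ℝ) ≤ (k1 : ℝ)),
          if_pos (Nat.cast_le.mpr h0), if_neg (by omega : ¬(k0 < n ∧ n ≤ k1))]
        norm_num [pPart]
    · rcases le_or_gt n k1 with h1 | h1
      · rw [if_pos (Nat.cast_le.mpr h1),
          if_neg (by exact_mod_cast not_le.mpr h0 : ¬(n : ℝ) ≤ (k0 : ℝ)),
          if_pos ⟨h0, h1⟩]
        norm_num [pPart]
      · rw [if_neg (by exact_mod_cast not_le.mpr h1 : ¬(n : ℝ) ≤ (k1 : ℝ)),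
          if_neg (by exact_mod_cast not_le.mpr (by omega) : ¬(n : ℝ) ≤ (k0 : ℝ)),
          if_neg (by omega : ¬(k0 < n ∧ n ≤ k1))]
        norm_num [pPart]
  rw [hLHS]
  have hcard : ((Finset.Icc 1 N).filter (fun n => k0 < n ∧ n ≤ k1)).card
      ≤ k1 - k0 := by
    calc ((Finset.Icc 1 N).filter (fun n => k0 < n ∧ n ≤ k1)).card
        ≤ (Finset.Ioc k0 k1).card := by
          apply Finset.card_le_card
          intro n hn
          rw [Finset.mem_filter] at hn
          rw [Finset.mem_Ioc]
          exact hn.2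
      _ = k1 - k0 := Nat.card_Ioc k0 k1
  have hmid : (((Finset.Icc 1 N).filter (fun n => k0 < n ∧ n ≤ k1)).card : ℝ)
      ≤ pPart ((k1 : ℝ) - (k0 : ℝ)) := by
    rcases le_total k0 k1 with h | h
    · calc (((Finset.Icc 1 N).filter (fun n => k0 < n ∧ n ≤ k1)).card : ℝ)
          ≤ ((k1 - k0 : ℕ) : ℝ) := by exact_mod_cast hcard
        _ = (k1 : ℝ) - (k0 : ℝ) := by push_cast [h]; ring
        _ ≤ pPart _ := le_max_left _ _
    · have : k1 - k0 = 0 := Nat.sub_eq_zero_of_le h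
      have h0 : ((Finset.Icc 1 N).filter (fun n => k0 < n ∧ n ≤ k1)).card = 0 := by omega
      rw [h0]
      simp only [pPart, Nat.cast_zero]; exact le_max_right ((k1 : ℝ) - (k0 : ℝ)) 0
  refine le_trans hmid ?_
  show max ((k1 : ℝ) - (k0 : ℝ)) 0 ≤ _
  apply max_le
  · rw [← hk1', ← hk0', ← Finset.sum_sub_distrib]
    exact Finset.sum_le_sum fun n _ => le_max_left _ _
  · exact Finset.sum_nonneg fun n _ => le_max_right _ _
end

section
/- For every time slot t with input σ(t) = (a(t), h(t), p(t)) satisfying a(t) ≥ 0, h(t) ≥ 0 and p(t) ≤ P_max, the one-slot cost difference satisfies δ(t) := ψ(σ(t),0) − ψ(σ(t),1) ≤ L·(P_max + η·c_g − c_o) − c_m; consequently, for a type-1 critical segment [T_i^c+1, T_{i+1}^c] (on which Δ rises from −β to 0), its length satisfies T_{i+1}^c − T_i^c ≥ β / ( L·(P_max + η·c_g − c_o) − c_m ). -/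
open scoped Classical

/-- the one-slot cost difference satisfies
`δ(t) ≤ L(P_max + η·c_g − c_o) − c_m`; consequently a type-1 critical segment,
on which `Δ` rises from `−β` to `0`, has length at least
`β/(L(P_max + η·c_g − c_o) − c_m)`. -/
theorem delta_bound_and_segment_length
    (L cm co cg η β Pmax : ℝ) (a h p : ℕ → ℝ)
    (hL : 0 < L) (hβ : 0 < β) (hcm : 0 < cm) (hco : 0 < co) (hcg : 0 < cg)
    (hη : 0 ≤ η) (hcocg : η * cg ≤ co) (hint : co + cm / L < Pmax + η * cg)
    (ha : ∀ t, 0 ≤ a t) (hh : ∀ t, 0 ≤ h t) (hp : ∀ t, p t ≤ Pmax) :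
    (∀ t, delta L cm co cg η a h p t ≤ L * (Pmax + η * cg - co) - cm) ∧
    (∀ t1 t2 : ℕ, t1 < t2 →
      Deficit β (delta L cm co cg η a h p) t1 = -β →
      Deficit β (delta L cm co cg η a h p) t2 = 0 →
      β / (L * (Pmax + η * cg - co) - cm) ≤ (t2 : ℝ) - (t1 : ℝ)) := by

  have hM : cm < L * (Pmax + η * cg - co) := by
    have h1 : cm / L < Pmax + η * cg - co := by linarith
    have := (div_lt_iff₀ hL).mp h1
    nlinarith
  have hMpos : 0 < L * (Pmax + η * cg - co) - cm := by linarith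
  have hd : ∀ t, delta L cm co cg η a h p t ≤ L * (Pmax + η * cg - co) - cm := by
    intro t
    have hA := ha t; have hH := hh t; have hP := hp t
    have hu00 : uStar L co cg η (a t) (h t) (p t) 0 = 0 := by
      unfold uStar
      split_ifs
      · rfl
      · rw [mul_zero]; exact min_eq_right hA
      · rw [mul_zero, min_eq_right hA]; exact min_eq_right (div_nonneg hH hη)
    have hu0 : 0 ≤ uStar L co cg η (a t) (h t) (p t) 1 := by
      unfold uStar
      have hL1 : 0 ≤ L * 1 := by nlinarith
      split_ifs
      · exact le_refl 0
      · exact le_min hA hL1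
      · exact le_min (div_nonneg hH hη) (le_min hA hL1)
    have huA : uStar L co cg η (a t) (h t) (p t) 1 ≤ a t := by
      unfold uStar
      split_ifs
      · exact hA
      · exact min_le_left _ _
      · exact le_trans (min_le_right _ _) (min_le_left _ _)
    by_cases hc : p t + η * cg ≤ co
    · have hu1 : uStar L co cg η (a t) (h t) (p t) 1 = 0 := by
        unfold uStar; rw [if_pos hc]
      simp only [delta, psi, hu1, hu00, pPart, mul_zero, sub_zero, mul_one]
      rw [max_eq_left hA, max_eq_left hH]
      linarith
    · have huL : uStar L co cg η (a t) (h t) (p t) 1 ≤ L := by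
        unfold uStar
        rw [if_neg hc]
        have hL1 : L * 1 ≤ L := le_of_eq (mul_one L)
        split_ifs
        · exact le_trans (min_le_right _ _) hL1
        · exact le_trans (min_le_right _ _) (le_trans (min_le_right _ _) hL1)
      simp only [delta, psi, hu00, pPart]
      set u := uStar L co cg η (a t) (h t) (p t) 1 with hu
      have hmaxA : max (a t - 0) 0 = a t := by rw [sub_zero]; exact max_eq_left hA
      have hmaxH : max (h t - η * 0) 0 = h t := by rw [mul_zero, sub_zero]; exact max_eq_left hH
      have hmaxAu : max (a t - u) 0 = a t - u := max_eq_left (by linarith)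
      rw [hmaxA, hmaxH, hmaxAu]
      have hm : h t - η * u ≤ max (h t - η * u) 0 := le_max_left _ _
      set m := max (h t - η * u) 0
      have hpos : 0 < p t + η * cg - co := by linarith
      have h1 : (p t + η * cg - co) * u ≤ (p t + η * cg - co) * L :=
        mul_le_mul_of_nonneg_left huL (le_of_lt hpos)
      have h2 : (p t + η * cg - co) * L ≤ (Pmax + η * cg - co) * L := by nlinarith
      have h3 : cg * (h t - m) ≤ cg * (η * u) :=
        mul_le_mul_of_nonneg_left (by linarith) (le_of_lt hcg)
      nlinarith
  refine ⟨hd, ?_⟩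
  set d := delta L cm co cg η a h p
  set M := L * (Pmax + η * cg - co) - cm with hMdef
  set D := Deficit β d
  have hDlb : ∀ t, -β ≤ D t := by
    intro t
    induction t with
    | zero => exact le_refl _
    | succ n ih =>
      show -β ≤ min 0 (max (-β) (D n + d (n + 1)))
      exact le_min (by linarith) (le_max_left _ _)
  have hstep : ∀ t, D (t + 1) ≤ D t + M := by
    intro t
    show min 0 (max (-β) (D t + d (t + 1))) ≤ D t + M
    refine le_trans (min_le_right _ _) (max_le ?_ ?_)
    · linarith [hDlb t]
    · linarith [hd (t + 1)]
  have hlin : ∀ s t, D (t + s) ≤ D t + s * M := by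
    intro s
    induction s with
    | zero => intro t; simp
    | succ n ih =>
      intro t
      have := hstep (t + n)
      have h2 := ih t
      push_cast
      calc D (t + (n + 1)) = D (t + n + 1) := by ring_nf
        _ ≤ D (t + n) + M := hstep (t + n)
        _ ≤ D t + n * M + M := by linarith
        _ = D t + (n + 1) * M := by ring
  intro t1 t2 hlt h1 h2
  obtain ⟨k, hk⟩ := Nat.exists_eq_add_of_le (le_of_lt hlt)
  have := hlin k t1
  rw [← hk, h1, h2] at this
  have hβk : β ≤ (k : ℝ) * M := by linarith
  have : β / M ≤ (k : ℝ) := by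
    rw [div_le_iff₀ hMpos]; linarith
  have hcast : (t2 : ℝ) - (t1 : ℝ) = (k : ℝ) := by
    have : t2 = t1 + k := hk
    rw [this]; push_cast; ring
  rw [hcast]
  assumption
end
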